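/- For each multiindex β, if F solves BF = 0 where B = Δ^5 + (1/10) y·∇ + (N/10) I, then ψ_β := ((-1)^{|β|}/√(β!)) D^β F satisfies B ψ_β = -(|β|/10) ψ_β; i.e., every negative multiple of 1/10 of a nonnegative integer is an eigenvalue of B with eigenfunction obtained by differentiating the kernel F. -/

import Mathlib

open scoped BigOperators

noncomputable def pd {N : ℕ} (i : Fin N) (f : EuclideanSpace ℝ (Fin N) → ℝ) :
    EuclideanSpace ℝ (Fin N) → ℝ :=
  fun y => fderiv ℝ f y (EuclideanSpace.single i 1)

variable {N : ℕ}

lemma pd_contDiff {f : EuclideanSpace ℝ (Fin N) → ℝ} (hf : ContDiff ℝ (⊤ : ℕ∞) f) (i : Fin N) :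
    ContDiff ℝ (⊤ : ℕ∞) (pd i f) :=
  (hf.fderiv_right (m := (⊤ : ℕ∞)) le_rfl).clm_apply contDiff_const

lemma pd_add {f g : EuclideanSpace ℝ (Fin N) → ℝ} (hf : Differentiable ℝ f)
    (hg : Differentiable ℝ g) (i : Fin N) (y : EuclideanSpace ℝ (Fin N)) :
    pd i (fun z => f z + g z) y = pd i f y + pd i g y := by
  simp only [pd]
  rw [fderiv_fun_add (hf y) (hg y)]
  rfl

lemma pd_const_mul {f : EuclideanSpace ℝ (Fin N) → ℝ} (hf : Differentiable ℝ f) (a : ℝ)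
    (i : Fin N) (y : EuclideanSpace ℝ (Fin N)) :
    pd i (fun z => a * f z) y = a * pd i f y := by
  simp only [pd]
  rw [fderiv_const_mul (hf y)]
  rfl

lemma pd_sum {s : Finset (Fin N)} {f : Fin N → EuclideanSpace ℝ (Fin N) → ℝ}
    (hf : ∀ j, Differentiable ℝ (f j)) (i : Fin N) (y : EuclideanSpace ℝ (Fin N)) :
    pd i (fun z => ∑ j ∈ s, f j z) y = ∑ j ∈ s, pd i (f j) y := by
  simp only [pd]
  rw [fderiv_fun_sum (fun j _ => (hf j) y), ContinuousLinearMap.sum_apply]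

lemma pd_comm {f : EuclideanSpace ℝ (Fin N) → ℝ} (hf : ContDiff ℝ (⊤ : ℕ∞) f) (i j : Fin N)
    (y : EuclideanSpace ℝ (Fin N)) :
    pd i (pd j f) y = pd j (pd i f) y := by
  have hd : DifferentiableAt ℝ (fderiv ℝ f) y :=
    (hf.fderiv_right (m := (⊤ : ℕ∞)) le_rfl).differentiable (by simp) y
  have hsymm := (hf.contDiffAt (x := y)).isSymmSndFDerivAt (n := (⊤ : ℕ∞)) (by rw [minSmoothness_of_isRCLikeNormedField]; exact WithTop.coe_le_coe.mpr le_top)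
  have key : ∀ v w : EuclideanSpace ℝ (Fin N),
      fderiv ℝ (fun z => fderiv ℝ f z v) y w = fderiv ℝ (fderiv ℝ f) y w v := by
    intro v w
    rw [fderiv_clm_apply hd (differentiableAt_const v)]
    simp
  show fderiv ℝ (fun z => fderiv ℝ f z (EuclideanSpace.single j 1)) y (EuclideanSpace.single i 1)
      = fderiv ℝ (fun z => fderiv ℝ f z (EuclideanSpace.single i 1)) y (EuclideanSpace.single j 1)
  rw [key, key]
  exact hsymm _ _

noncomputable def lap {N : ℕ} (f : EuclideanSpace ℝ (Fin N) → ℝ) :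
    EuclideanSpace ℝ (Fin N) → ℝ :=
  fun y => ∑ i, pd i (pd i f) y

noncomputable def gradDot {N : ℕ} (f : EuclideanSpace ℝ (Fin N) → ℝ)
    (y : EuclideanSpace ℝ (Fin N)) : ℝ :=
  ∑ i, y i * pd i f y

lemma pd_mul {c d : EuclideanSpace ℝ (Fin N) → ℝ} (hc : Differentiable ℝ c)
    (hd : Differentiable ℝ d) (i : Fin N) (y : EuclideanSpace ℝ (Fin N)) :
    pd i (fun z => c z * d z) y = c y * pd i d y + d y * pd i c y := by
  simp only [pd]
  rw [fderiv_fun_mul (hc y) (hd y)]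
  simp

lemma lap_contDiff {f : EuclideanSpace ℝ (Fin N) → ℝ} (hf : ContDiff ℝ (⊤ : ℕ∞) f) :
    ContDiff ℝ (⊤ : ℕ∞) (lap f) :=
  ContDiff.sum fun i _ => pd_contDiff (pd_contDiff hf i) i

lemma lap_iter_contDiff {f : EuclideanSpace ℝ (Fin N) → ℝ} (hf : ContDiff ℝ (⊤ : ℕ∞) f) (k : ℕ) :
    ContDiff ℝ (⊤ : ℕ∞) (lap^[k] f) := by
  induction k with
  | zero => exact hf
  | succ k ih => rw [Function.iterate_succ_apply']; exact lap_contDiff ih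

lemma coord_contDiff (j : Fin N) :
    ContDiff ℝ (⊤ : ℕ∞) (fun y : EuclideanSpace ℝ (Fin N) => y j) :=
  (EuclideanSpace.proj (𝕜 := ℝ) j).contDiff

lemma pd_coord (i j : Fin N) (y : EuclideanSpace ℝ (Fin N)) :
    pd i (fun z : EuclideanSpace ℝ (Fin N) => z j) y = if i = j then 1 else 0 := by
  have h : (fun z : EuclideanSpace ℝ (Fin N) => z j)
      = ⇑(EuclideanSpace.proj (𝕜 := ℝ) j) := rfl
  simp only [pd, h, ContinuousLinearMap.fderiv]
  simp [EuclideanSpace.single_apply, eq_comm]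

lemma gradDot_contDiff {f : EuclideanSpace ℝ (Fin N) → ℝ} (hf : ContDiff ℝ (⊤ : ℕ∞) f) :
    ContDiff ℝ (⊤ : ℕ∞) (fun y => gradDot f y) :=
  ContDiff.sum fun j _ => (coord_contDiff j).mul (pd_contDiff hf j)

lemma pd_lap {f : EuclideanSpace ℝ (Fin N) → ℝ} (hf : ContDiff ℝ (⊤ : ℕ∞) f) (i : Fin N)
    (y : EuclideanSpace ℝ (Fin N)) :
    pd i (lap f) y = lap (pd i f) y := by
  have h1 : lap f = fun z => ∑ j, pd j (pd j f) z := rfl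
  rw [h1, pd_sum (fun j => (pd_contDiff (pd_contDiff hf j) j).differentiable (by simp)) i y]
  show _ = ∑ j, pd j (pd j (pd i f)) y
  refine Finset.sum_congr rfl fun j _ => ?_
  rw [pd_comm (pd_contDiff hf j) i j y, funext (pd_comm hf i j)]

lemma pd_gradDot {f : EuclideanSpace ℝ (Fin N) → ℝ} (hf : ContDiff ℝ (⊤ : ℕ∞) f) (i : Fin N)
    (y : EuclideanSpace ℝ (Fin N)) :
    pd i (fun z => gradDot f z) y = pd i f y + gradDot (pd i f) y := by
  have h1 : (fun z => gradDot f z) = fun z => ∑ j, (fun w : EuclideanSpace ℝ (Fin N) => w j * pd j f w) z := rfl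
  rw [h1, pd_sum (fun j => ((coord_contDiff j).mul (pd_contDiff hf j)).differentiable (by simp)) i y]
  have h2 : ∀ j, pd i (fun w : EuclideanSpace ℝ (Fin N) => w j * pd j f w) y
      = (if i = j then 1 else 0) * pd j f y + y j * pd j (pd i f) y := by
    intro j
    rw [pd_mul ((coord_contDiff j).differentiable (by simp))
      ((pd_contDiff hf j).differentiable (by simp)) i y, pd_coord]
    rw [funext (pd_comm hf i j)]
    ring
  rw [Finset.sum_congr rfl fun j _ => h2 j, Finset.sum_add_distrib]
  congr 1
  simp

/-- The operator `B = Δ^5 + (1/10) y·∇ + (N/10) I`. -/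
noncomputable def Bop {N : ℕ} (f : EuclideanSpace ℝ (Fin N) → ℝ)
    (y : EuclideanSpace ℝ (Fin N)) : ℝ :=
  lap^[5] f y + (1 / 10) * gradDot f y + ((N : ℝ) / 10) * f y

/-- The multiindex derivative `D^β f = ∂_{y_1}^{β_1} ⋯ ∂_{y_N}^{β_N} f`. -/
noncomputable def Dmulti {N : ℕ} (β : Fin N → ℕ) (f : EuclideanSpace ℝ (Fin N) → ℝ) :
    EuclideanSpace ℝ (Fin N) → ℝ :=
  (List.finRange N).foldr (fun i g => (pd i)^[β i] g) f

lemma pd_lap_iter {f : EuclideanSpace ℝ (Fin N) → ℝ} (hf : ContDiff ℝ (⊤ : ℕ∞) f) (k : ℕ)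
    (i : Fin N) (y : EuclideanSpace ℝ (Fin N)) :
    pd i (lap^[k] f) y = lap^[k] (pd i f) y := by
  induction k generalizing y with
  | zero => rfl
  | succ k ih =>
    rw [Function.iterate_succ_apply', Function.iterate_succ_apply',
      pd_lap (lap_iter_contDiff hf k) i y]
    show lap (pd i (lap^[k] f)) y = _
    rw [funext ih]

/-- Key commutation: `B (∂_i f) = ∂_i (B f) - (1/10) ∂_i f`. -/
lemma Bop_pd {f : EuclideanSpace ℝ (Fin N) → ℝ} (hf : ContDiff ℝ (⊤ : ℕ∞) f) {c : ℝ}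
    (hc : ∀ y, Bop f y = c * f y) (i : Fin N) :
    ∀ y, Bop (pd i f) y = (c - 1 / 10) * pd i f y := by
  intro y
  have hBf : (fun z => Bop f z) = fun z => c * f z := funext hc
  have h5 : Differentiable ℝ (lap^[5] f) := (lap_iter_contDiff hf 5).differentiable (by simp)
  have hg : Differentiable ℝ (fun z => gradDot f z) :=
    (gradDot_contDiff hf).differentiable (by simp)
  have hdf : Differentiable ℝ f := hf.differentiable (by simp)
  have e1 : pd i (fun z => Bop f z) y = c * pd i f y := by
    rw [hBf, pd_const_mul hdf c i y]
  have e2 : pd i (fun z => Bop f z) y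
      = pd i (lap^[5] f) y + (1 / 10) * pd i (fun z => gradDot f z) y
        + ((N : ℝ) / 10) * pd i f y := by
    have hB : (fun z => Bop f z)
        = fun z => (lap^[5] f z + (1 / 10) * gradDot f z) + ((N : ℝ) / 10) * f z := rfl
    rw [hB, pd_add (h5.fun_add (((differentiable_const _).fun_mul hg)))
      ((differentiable_const _).fun_mul hdf) i y,
      pd_add h5 ((differentiable_const _).fun_mul hg) i y,
      pd_const_mul hg (1 / 10) i y, pd_const_mul hdf ((N : ℝ) / 10) i y]
  have e3 : Bop (pd i f) y
      = pd i (lap^[5] f) y + (1 / 10) * (pd i (fun z => gradDot f z) y - pd i f y)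
        + ((N : ℝ) / 10) * pd i f y := by
    show lap^[5] (pd i f) y + (1 / 10) * gradDot (pd i f) y + ((N : ℝ) / 10) * pd i f y = _
    rw [← pd_lap_iter hf 5 i y, pd_gradDot hf i y]
    ring
  rw [e3]
  have := e2.symm.trans e1
  linarith [this]

/-- Iterated version along `(pd i)^[n]`. -/
lemma Bop_pd_iter {f : EuclideanSpace ℝ (Fin N) → ℝ} (hf : ContDiff ℝ (⊤ : ℕ∞) f) {c : ℝ}
    (hc : ∀ y, Bop f y = c * f y) (i : Fin N) (n : ℕ) :
    ContDiff ℝ (⊤ : ℕ∞) ((pd i)^[n] f) ∧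
      ∀ y, Bop ((pd i)^[n] f) y = (c - n / 10) * (pd i)^[n] f y := by
  induction n with
  | zero => simpa using ⟨hf, hc⟩
  | succ n ih =>
    rw [Function.iterate_succ_apply']
    refine ⟨pd_contDiff ih.1 i, ?_⟩
    have := Bop_pd ih.1 ih.2 i
    intro y
    rw [this y]
    push_cast
    ring_nf

lemma Bop_foldr (l : List (Fin N)) (β : Fin N → ℕ) {f : EuclideanSpace ℝ (Fin N) → ℝ}
    (hf : ContDiff ℝ (⊤ : ℕ∞) f) {c : ℝ} (hc : ∀ y, Bop f y = c * f y) :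
    ContDiff ℝ (⊤ : ℕ∞) (l.foldr (fun i g => (pd i)^[β i] g) f) ∧
      ∀ y, Bop (l.foldr (fun i g => (pd i)^[β i] g) f) y
        = (c - ((l.map β).sum : ℝ) / 10) * l.foldr (fun i g => (pd i)^[β i] g) f y := by
  induction l with
  | nil => simpa using ⟨hf, hc⟩
  | cons i l ih =>
    simp only [List.foldr_cons, List.map_cons, List.sum_cons]
    obtain ⟨h1, h2⟩ := Bop_pd_iter ih.1 ih.2 i (β i)
    refine ⟨h1, fun y => ?_⟩
    rw [h2 y]
    push_cast
    ring_nf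

lemma pd_const_mul_fun {f : EuclideanSpace ℝ (Fin N) → ℝ} (hf : ContDiff ℝ (⊤ : ℕ∞) f) (a : ℝ)
    (i : Fin N) : pd i (fun z => a * f z) = fun z => a * pd i f z :=
  funext (pd_const_mul (hf.differentiable (by simp)) a i)

lemma lap_const_mul {f : EuclideanSpace ℝ (Fin N) → ℝ} (hf : ContDiff ℝ (⊤ : ℕ∞) f) (a : ℝ) :
    lap (fun z => a * f z) = fun z => a * lap f z := by
  funext y
  show ∑ i, pd i (pd i (fun z => a * f z)) y = a * ∑ i, pd i (pd i f) y
  rw [Finset.mul_sum]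
  refine Finset.sum_congr rfl fun i _ => ?_
  rw [pd_const_mul_fun hf a i, pd_const_mul ((pd_contDiff hf i).differentiable (by simp)) a i y]

lemma lap_iter_const_mul {f : EuclideanSpace ℝ (Fin N) → ℝ} (hf : ContDiff ℝ (⊤ : ℕ∞) f) (a : ℝ)
    (k : ℕ) : lap^[k] (fun z => a * f z) = fun z => a * lap^[k] f z := by
  induction k with
  | zero => rfl
  | succ k ih =>
    rw [Function.iterate_succ_apply', Function.iterate_succ_apply', ih,
      lap_const_mul (lap_iter_contDiff hf k) a]

lemma gradDot_const_mul {f : EuclideanSpace ℝ (Fin N) → ℝ} (hf : ContDiff ℝ (⊤ : ℕ∞) f) (a : ℝ)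
    (y : EuclideanSpace ℝ (Fin N)) :
    gradDot (fun z => a * f z) y = a * gradDot f y := by
  show ∑ i, y i * pd i (fun z => a * f z) y = a * ∑ i, y i * pd i f y
  rw [Finset.mul_sum]
  refine Finset.sum_congr rfl fun i _ => ?_
  rw [pd_const_mul (hf.differentiable (by simp)) a i y]
  ring

lemma Bop_const_mul {f : EuclideanSpace ℝ (Fin N) → ℝ} (hf : ContDiff ℝ (⊤ : ℕ∞) f) (a : ℝ)
    (y : EuclideanSpace ℝ (Fin N)) :
    Bop (fun z => a * f z) y = a * Bop f y := by
  show lap^[5] (fun z => a * f z) y + (1 / 10) * gradDot (fun z => a * f z) y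
      + ((N : ℝ) / 10) * (a * f y) = _
  rw [lap_iter_const_mul hf a 5, gradDot_const_mul hf a y]
  show a * lap^[5] f y + _ + _ = a * (lap^[5] f y + (1 / 10) * gradDot f y + ((N : ℝ) / 10) * f y)
  ring

/-- if `B F = 0`, then for every multiindex `β`, the function
`ψ_β = ((-1)^{|β|}/√(β!)) D^β F` satisfies `B ψ_β = -(|β|/10) ψ_β`. -/
theorem eigenfunctions_of_B (N : ℕ) (hN : 0 < N)
    (F : EuclideanSpace ℝ (Fin N) → ℝ) (hF : ContDiff ℝ (⊤ : ℕ∞) F)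
    (hBF : ∀ y, Bop F y = 0) (β : Fin N → ℕ) :
    ∀ y, Bop (fun z =>
        ((-1 : ℝ) ^ (∑ i, β i) / Real.sqrt ((∏ i, Nat.factorial (β i) : ℕ) : ℝ))
          * Dmulti β F z) y
      = -(((∑ i, β i : ℕ) : ℝ) / 10) *
        (((-1 : ℝ) ^ (∑ i, β i) / Real.sqrt ((∏ i, Nat.factorial (β i) : ℕ) : ℝ))
          * Dmulti β F y) := by
  intro y
  set a : ℝ := (-1 : ℝ) ^ (∑ i, β i) / Real.sqrt ((∏ i, Nat.factorial (β i) : ℕ) : ℝ) with ha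
  have hc0 : ∀ y, Bop F y = (0 : ℝ) * F y := by simpa using hBF
  obtain ⟨hg, hBg⟩ := Bop_foldr (List.finRange N) β hF hc0
  have hsum : (((List.finRange N).map β).sum : ℝ) = ((∑ i, β i : ℕ) : ℝ) := by
    rw [Fin.sum_univ_def]
  simp only [Dmulti]
  rw [Bop_const_mul hg a y, hBg y, hsum]
  ring
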